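/- arXiv:2402.06765 — 3 statements merged into one kernel-verified Lean document; each statement's English description precedes it below -/
import Mathlib

section
/- Let μ̄, μ ∈ ΔΘ, ε > 0, and a ∈ A. If A*_R(μ) = {a}, a ∈ A*_R(μ̄), and ∫ u_S(a,θ) dμ̄(θ) > v(μ̄) − ε, then there exists λ̄ ∈ (0,1] such that for every λ ∈ (0,λ̄], w(λμ + (1−λ)μ̄) > v(μ̄) − ε. -/
open MeasureTheory


/-- The Borel σ-algebra on the space of probability measures (the σ-algebra generated by
evaluation maps, i.e. the subspace σ-algebra of the Giry σ-algebra; for metrizable spaces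
this is the Borel σ-algebra of the weak* topology). -/
instance probMeasurableSpace {Ω : Type*} [MeasurableSpace Ω] :
    MeasurableSpace (ProbabilityMeasure Ω) :=
  MeasurableSpace.comap (fun μ => (μ : Measure Ω)) inferInstance

/-- Sender's expected utility from action `a` at belief `μ`. -/
noncomputable def senderEU {A Θ : Type*} [MeasurableSpace Θ]
    (uS : A → Θ → ℝ) (μ : ProbabilityMeasure Θ) (a : A) : ℝ :=
  ∫ θ, uS a θ ∂(μ : Measure Θ)

/-- The receiver's best responses `A*_R(μ)` at belief `μ`. -/
def bestResponses {A Θ : Type*} [MeasurableSpace Θ]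
    (uR : A → Θ → ℝ) (μ : ProbabilityMeasure Θ) : Set A :=
  {a | ∀ a' : A, ∫ θ, uR a' θ ∂(μ : Measure Θ) ≤ ∫ θ, uR a θ ∂(μ : Measure Θ)}

/-- The sender's upper value function `v`. -/
noncomputable def vFun {A Θ : Type*} [MeasurableSpace Θ]
    (uS uR : A → Θ → ℝ) (μ : ProbabilityMeasure Θ) : ℝ :=
  sSup (senderEU uS μ '' bestResponses uR μ)

/-- The sender's lower value function `w`. -/
noncomputable def wFun {A Θ : Type*} [MeasurableSpace Θ]
    (uS uR : A → Θ → ℝ) (μ : ProbabilityMeasure Θ) : ℝ :=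
  sInf (senderEU uS μ '' bestResponses uR μ)

/-- The set `I(μ0)` of information policies: distributions over posteriors with
barycenter equal to the prior `μ0`. -/
def infoPolicies {Θ : Type*} [MeasurableSpace Θ] (μ0 : ProbabilityMeasure Θ) :
    Set (ProbabilityMeasure (ProbabilityMeasure Θ)) :=
  {p | ∀ B : Set Θ, MeasurableSet B →
    ∫ ν, ((ν : Measure Θ) B).toReal ∂(p : Measure (ProbabilityMeasure Θ))
      = ((μ0 : Measure Θ) B).toReal}

/-- `v̂(μ0)`: the sender's best equilibrium (Bayesian persuasion) value. -/
noncomputable def vHat {A Θ : Type*} [MeasurableSpace Θ]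
    (uS uR : A → Θ → ℝ) (μ0 : ProbabilityMeasure Θ) : ℝ :=
  sSup ((fun p : ProbabilityMeasure (ProbabilityMeasure Θ) =>
    ∫ ν, vFun uS uR ν ∂(p : Measure (ProbabilityMeasure Θ))) '' infoPolicies μ0)

/-- `ŵ(μ0)`: the sender's worst equilibrium value. -/
noncomputable def wHat {A Θ : Type*} [MeasurableSpace Θ]
    (uS uR : A → Θ → ℝ) (μ0 : ProbabilityMeasure Θ) : ℝ :=
  sSup ((fun p : ProbabilityMeasure (ProbabilityMeasure Θ) =>
    ∫ ν, wFun uS uR ν ∂(p : Measure (ProbabilityMeasure Θ))) '' infoPolicies μ0)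

/-- If `a` is the unique receiver best response at `μ`, is a best response at `mubar`,
and gives the sender within `ε` of `v(mubar)` there, then for all sufficiently small
`λ ∈ (0,1]` one has `w(λμ + (1−λ)mubar) > v(mubar) − ε`. -/
theorem wFun_gt_of_unique_best_response_perturbation
    {A Θ : Type*}
    [TopologicalSpace A] [CompactSpace A] [TopologicalSpace.MetrizableSpace A] [Nonempty A]
    [MeasurableSpace A] [BorelSpace A]
    [TopologicalSpace Θ] [CompactSpace Θ] [TopologicalSpace.MetrizableSpace Θ] [Nonempty Θ]
    [MeasurableSpace Θ] [BorelSpace Θ]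
    (uS uR : A → Θ → ℝ)
    (hS : Continuous fun p : A × Θ => uS p.1 p.2)
    (hR : Continuous fun p : A × Θ => uR p.1 p.2)
    (mubar μ : ProbabilityMeasure Θ) (ε : ℝ) (hε : 0 < ε) (a : A)
    (huniq : bestResponses uR μ = {a})
    (hbr : a ∈ bestResponses uR mubar)
    (hval : vFun uS uR mubar - ε < senderEU uS mubar a) :
    ∃ lam0 : ℝ, 0 < lam0 ∧ lam0 ≤ 1 ∧ ∀ lam : ℝ, 0 < lam → lam ≤ lam0 →
      ∀ ν : ProbabilityMeasure Θ,
        (ν : Measure Θ) = ENNReal.ofReal lam • (μ : Measure Θ) +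
          ENNReal.ofReal (1 - lam) • (mubar : Measure Θ) →
        vFun uS uR mubar - ε < wFun uS uR ν := by
  classical
  set s := senderEU uS μ a with hs
  set t := senderEU uS mubar a with ht
  set c := vFun uS uR mubar - ε with hc
  have hδ : 0 < t - c := by simpa [hc] using hval
  have hden : (0:ℝ) < |s - t| + 1 := by positivity
  refine ⟨min 1 ((t - c) / (|s - t| + 1)), lt_min one_pos (div_pos hδ hden),
    min_le_left _ _, ?_⟩
  intro lam hl0 hl1 ν hν
  have hlam1 : lam ≤ 1 := hl1.trans (min_le_left _ _)
  have hlam' : lam ≤ (t - c) / (|s - t| + 1) := hl1.trans (min_le_right _ _)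
  -- integrability of continuous functions
  have hint : ∀ (b : A) (f : A → Θ → ℝ), (Continuous fun p : A × Θ => f p.1 p.2) →
      ∀ κ : ProbabilityMeasure Θ, Integrable (fun θ => f b θ) (κ : Measure Θ) := by
    intro b f hf κ
    exact (hf.comp (Continuous.prodMk_right b)).integrable_of_hasCompactSupport
      (HasCompactSupport.of_compactSpace _)
  -- integral against the mixture
  have hmix : ∀ (b : A) (f : A → Θ → ℝ), (Continuous fun p : A × Θ => f p.1 p.2) →
      ∫ θ, f b θ ∂(ν : Measure Θ)
        = lam * ∫ θ, f b θ ∂(μ : Measure Θ)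
          + (1 - lam) * ∫ θ, f b θ ∂(mubar : Measure Θ) := by
    intro b f hf
    rw [hν, integral_add_measure (((hint b f hf μ)).smul_measure (by simp))
        (((hint b f hf mubar)).smul_measure (by simp)),
      integral_smul_measure, integral_smul_measure,
      ENNReal.toReal_ofReal hl0.le, ENNReal.toReal_ofReal (by linarith)]
    simp [smul_eq_mul]
  have haμ : a ∈ bestResponses uR μ := by rw [huniq]; rfl
  -- the unique best response at ν is a
  have hBR : bestResponses uR ν = {a} := by
    ext b
    simp only [Set.mem_singleton_iff]
    constructor
    · intro hb
      have h1 := hb a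
      rw [hmix a uR hR, hmix b uR hR] at h1
      have h2 := haμ b
      have h3 := hbr b
      have hbμ : b ∈ bestResponses uR μ := by
        intro a'
        have h4 : ∫ θ, uR b θ ∂(μ : Measure Θ) = ∫ θ, uR a θ ∂(μ : Measure Θ) := by
          nlinarith
        rw [h4]; exact haμ a'
      have := huniq ▸ hbμ
      exact this
    · intro hba
      rw [hba]
      intro a'
      have h2 := haμ a'
      have h3 := hbr a'
      rw [hmix a uR hR, hmix a' uR hR]
      nlinarith
  have hw : wFun uS uR ν = senderEU uS ν a := by
    rw [wFun, hBR, Set.image_singleton, csInf_singleton]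
  have hEU : senderEU uS ν a = lam * s + (1 - lam) * t := by
    rw [hs, ht, senderEU, senderEU, senderEU]
    exact hmix a uS hS
  rw [hw, hEU]
  have h1 : t - s ≤ |s - t| := by rw [abs_sub_comm]; exact le_abs_self _
  have h2 : lam * (|s - t| + 1) ≤ t - c := (le_div_iff₀ hden).mp hlam'
  show c < lam * s + (1 - lam) * t
  nlinarith [abs_nonneg (s - t)]
end

section
/- Let A and Θ be nonempty finite sets, and define 𝒰_R := { u_R ∈ ℝ^{A×Θ} : for every μ ∈ ΔΘ and every a ∈ A*_R(μ), there exists μ' ∈ Δ(supp μ) with A*_R(μ') = {a} }. Then 𝒰_R is open and dense in ℝ^{A×Θ} and its complement has Lebesgue measure zero. -/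
open MeasureTheory

/-- The receiver's best responses `A*_R(μ)` to a belief vector `μ` on a finite state
space. -/
def BRf {A Θ : Type*} [Fintype Θ] (uR : A → Θ → ℝ) (μ : Θ → ℝ) : Set A :=
  {a | ∀ a' : A, ∑ θ, uR a' θ * μ θ ≤ ∑ θ, uR a θ * μ θ}

/-- The set `𝒰_R` of receiver utilities such that every best response at any belief is
the unique best response at some belief with smaller support. -/
def URset (A Θ : Type) [Fintype A] [Fintype Θ] : Set (A × Θ → ℝ) :=
  {uR | ∀ μ ∈ stdSimplex ℝ Θ, ∀ a ∈ BRf (fun a θ => uR (a, θ)) μ,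
    ∃ μ' ∈ stdSimplex ℝ Θ, (∀ θ : Θ, μ' θ ≠ 0 → μ θ ≠ 0) ∧
      BRf (fun a θ => uR (a, θ)) μ' = {a}}

/-!
For nonempty `S ⊆ Θ` let `maxMargin u a S` be the largest margin, over beliefs supported in `S`,
by which `a` beats every other action. A utility `u` lies in `𝒰_R` exactly when none of these
finitely many numbers vanishes: a zero maximum is attained at a belief where `a` is a best
response although no belief in `Δ(S)` makes it the unique one, while a positive maximum over
`Δ(supp μ)` provides the required `μ'`. Each `maxMargin · a S` is continuous (a maximum over a
compact set of a jointly continuous function), which gives openness. Adding `t` to every payoff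
of `a` raises it by exactly `t`, so its zero set meets each line in that direction at most once
and is Lebesgue-null; density follows because null sets have empty interior.
-/

theorem MeasureTheory.Measure.addHaar_preimage_singleton_eq_zero_of_map_add_smul {E : Type*}
    [NormedAddCommGroup E] [NormedSpace ℝ E] [MeasurableSpace E] [BorelSpace E]
    [FiniteDimensional ℝ E] (μ : Measure E) [μ.IsAddHaarMeasure] {f : E → ℝ}
    (hf : Measurable f) {v : E} (hfv : ∀ x (t : ℝ), f (x + t • v) = f x + t) (c : ℝ) :
    μ (f ⁻¹' {c}) = 0 := by
  set t : ℕ → ℝ := fun n => ((n : ℝ) + 1)⁻¹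
  refine Measure.addHaar_eq_zero_of_disjoint_translates μ (fun n => t n • v) ?_ ?_
    (hf (measurableSet_singleton c))
  · refine isBounded_iff_forall_norm_le.2 ⟨‖v‖, ?_⟩
    rintro _ ⟨n, rfl⟩
    rw [norm_smul, norm_inv, Real.norm_of_nonneg (by positivity)]
    exact mul_le_of_le_one_left (norm_nonneg v) (inv_le_one_of_one_le₀ (by simp))
  · intro m n hmn
    simp only [Function.onFun, Set.singleton_add, Set.disjoint_left]
    rintro _ ⟨x, hx, rfl⟩ ⟨y, hy, hxy⟩
    rw [Set.mem_preimage, Set.mem_singleton_iff] at hx hy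
    have hfxy := congr_arg f hxy
    simp only [add_comm (t _ • v), hfv, hx, hy, t] at hfxy
    exact hmn (by simpa using hfxy.symm)

namespace BestResponse

variable {A Θ : Type*} [Fintype A] [Fintype Θ]

def expectedUtility (u : A × Θ → ℝ) (a : A) (μ : Θ → ℝ) : ℝ := ∑ θ, u (a, θ) * μ θ

/-- The face `Δ(S)` of the simplex. -/
def simplexOn (S : Finset Θ) : Set (Θ → ℝ) := stdSimplex ℝ Θ ∩ {μ | ∀ θ ∉ S, μ θ = 0}

theorem isCompact_simplexOn (S : Finset Θ) : IsCompact (simplexOn S) := by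
  refine (isCompact_stdSimplex ℝ Θ).inter_right ?_
  simp only [Set.ofPred_forall]
  exact isClosed_iInter fun θ => isClosed_iInter fun _ =>
    isClosed_eq (continuous_apply θ) continuous_const

theorem simplexOn_nonempty {S : Finset Θ} (hS : S.Nonempty) : (simplexOn S).Nonempty := by
  classical
  obtain ⟨θ, hθ⟩ := hS
  exact ⟨Pi.single θ 1, single_mem_stdSimplex ℝ θ, fun θ' hθ' =>
    Pi.single_eq_of_ne (ne_of_mem_of_not_mem hθ hθ').symm 1⟩

section Margin

variable [DecidableEq A] [Nontrivial A]

noncomputable def margin (u : A × Θ → ℝ) (a : A) (μ : Θ → ℝ) : ℝ :=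
  (Finset.univ.erase a).inf' Finset.univ_nontrivial.erase_nonempty
    fun b => expectedUtility u a μ - expectedUtility u b μ

theorem le_margin_iff {u : A × Θ → ℝ} {a : A} {μ : Θ → ℝ} {c : ℝ} :
    c ≤ margin u a μ ↔ ∀ b ≠ a, c ≤ expectedUtility u a μ - expectedUtility u b μ := by
  simp [margin, Finset.le_inf'_iff]

theorem lt_margin_iff {u : A × Θ → ℝ} {a : A} {μ : Θ → ℝ} {c : ℝ} :
    c < margin u a μ ↔ ∀ b ≠ a, c < expectedUtility u a μ - expectedUtility u b μ := by
  simp [margin, Finset.lt_inf'_iff]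

theorem mem_BRf_iff_margin_nonneg {u : A × Θ → ℝ} {a : A} {μ : Θ → ℝ} :
    a ∈ BRf (fun a θ => u (a, θ)) μ ↔ 0 ≤ margin u a μ := by
  simp only [le_margin_iff, sub_nonneg]
  exact ⟨fun h b _ => h b, fun h b => (eq_or_ne b a).elim (fun hb => hb ▸ le_rfl) (h b)⟩

theorem BRf_eq_singleton_iff_margin_pos {u : A × Θ → ℝ} {a : A} {μ : Θ → ℝ} :
    BRf (fun a θ => u (a, θ)) μ = {a} ↔ 0 < margin u a μ := by
  simp only [lt_margin_iff, sub_pos]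
  constructor
  · intro h b hb
    have hbBR : b ∉ BRf (fun a θ => u (a, θ)) μ := by simpa [h] using hb
    have haBR : a ∈ BRf (fun a θ => u (a, θ)) μ := h ▸ rfl
    obtain ⟨c, hc⟩ := not_forall.1 hbBR
    exact (not_le.1 hc).trans_le (haBR c)
  · intro h
    ext b
    refine ⟨fun hb => by_contra fun hba => (hb a).not_gt (h b hba), ?_⟩
    rintro rfl c
    exact (eq_or_ne c b).elim (fun hc => hc ▸ le_rfl) fun hc => (h c hc).le

/-- This is `sSup ∅ = 0` for `S = ∅`, hence the nonemptiness hypotheses below. -/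
noncomputable def maxMargin (u : A × Θ → ℝ) (a : A) (S : Finset Θ) : ℝ :=
  sSup (margin u a '' simplexOn S)

theorem continuous_margin (a : A) :
    Continuous fun p : (A × Θ → ℝ) × (Θ → ℝ) => margin p.1 a p.2 := by
  refine Continuous.finset_inf'_apply _ fun b _ => ?_
  unfold expectedUtility
  fun_prop

theorem continuous_maxMargin (a : A) (S : Finset Θ) :
    Continuous fun u : A × Θ → ℝ => maxMargin u a S :=
  (isCompact_simplexOn S).continuous_sSup (continuous_margin a)

theorem bddAbove_margin_image (u : A × Θ → ℝ) (a : A) (S : Finset Θ) :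
    BddAbove (margin u a '' simplexOn S) :=
  (isCompact_simplexOn S).bddAbove_image
    ((continuous_margin a).comp (.prodMk_right u)).continuousOn

theorem margin_le_maxMargin (u : A × Θ → ℝ) (a : A) {S : Finset Θ} {μ : Θ → ℝ}
    (hμ : μ ∈ simplexOn S) : margin u a μ ≤ maxMargin u a S :=
  le_csSup (bddAbove_margin_image u a S) ⟨μ, hμ, rfl⟩

theorem exists_margin_eq_maxMargin (u : A × Θ → ℝ) (a : A) {S : Finset Θ} (hS : S.Nonempty) :
    ∃ μ ∈ simplexOn S, margin u a μ = maxMargin u a S := by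
  obtain ⟨μ, hμ, h⟩ := (isCompact_simplexOn S).exists_sSup_image_eq (simplexOn_nonempty hS)
    ((continuous_margin a).comp (.prodMk_right u)).continuousOn
  exact ⟨μ, hμ, h.symm⟩

theorem margin_add_smul (u : A × Θ → ℝ) (a : A) {μ : Θ → ℝ} (hμ : ∑ θ, μ θ = 1) (t : ℝ) :
    margin (u + t • fun p => if p.1 = a then 1 else 0) a μ = margin u a μ + t := by
  have hEU : ∀ b, expectedUtility (u + t • fun p => if p.1 = a then 1 else 0) b μ =
      expectedUtility u b μ + if b = a then t else 0 := by
    intro b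
    split_ifs with hb <;>
      simp [expectedUtility, hb, add_mul, Finset.sum_add_distrib, ← Finset.mul_sum, hμ]
  rw [← OrderIso.addRight_apply t, margin, margin, map_finset_inf']
  refine Finset.inf'_congr _ rfl fun b hb => ?_
  simp only [hEU, ↓reduceIte, if_neg (Finset.ne_of_mem_erase hb), Function.comp_apply,
    OrderIso.addRight_apply]
  ring

theorem maxMargin_add_smul (u : A × Θ → ℝ) (a : A) {S : Finset Θ} (hS : S.Nonempty) (t : ℝ) :
    maxMargin (u + t • fun p => if p.1 = a then 1 else 0) a S = maxMargin u a S + t := by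
  rw [← OrderIso.addRight_apply t, maxMargin, maxMargin, OrderIso.map_csSup' _
    ((simplexOn_nonempty hS).image _) (bddAbove_margin_image u a S),
    Set.image_image]
  exact congrArg sSup (Set.image_congr fun μ hμ => margin_add_smul u a hμ.1.2 t)

end Margin

end BestResponse

open BestResponse

theorem URset_eq_univ_of_subsingleton {A Θ : Type} [Fintype A] [Fintype Θ] [Subsingleton A] :
    URset A Θ = Set.univ := by
  refine Set.eq_univ_of_forall fun u μ hμ a _ => ⟨μ, hμ, fun _ h => h, ?_⟩
  exact Set.eq_singleton_iff_unique_mem.2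
    ⟨fun b => Subsingleton.elim b a ▸ le_rfl, fun b _ => Subsingleton.elim b a⟩

section Nontrivial

variable {A Θ : Type} [Fintype A] [Fintype Θ] [DecidableEq A] [Nontrivial A]

theorem mem_URset_iff {u : A × Θ → ℝ} :
    u ∈ URset A Θ ↔ ∀ a, ∀ S : Finset Θ, S.Nonempty → maxMargin u a S ≠ 0 := by
  constructor
  · intro hu a S hS h0
    obtain ⟨μ, hμS, hμ⟩ := exists_margin_eq_maxMargin u a hS
    obtain ⟨μ', hμ', hsupp, hBR⟩ :=
      hu μ hμS.1 a (mem_BRf_iff_margin_nonneg.2 (hμ.trans h0).ge)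
    have hμ'S : μ' ∈ simplexOn S :=
      ⟨hμ', fun θ hθ => by_contra fun h => hsupp θ h (hμS.2 θ hθ)⟩
    exact (BRf_eq_singleton_iff_margin_pos.1 hBR).not_ge (h0 ▸ margin_le_maxMargin u a hμ'S)
  · intro hu μ hμ a ha
    classical
    set S := Finset.univ.filter (μ · ≠ 0)
    have hμS : μ ∈ simplexOn S := ⟨hμ, fun θ hθ => by simpa [S] using hθ⟩
    have hS : S.Nonempty := by
      obtain ⟨θ, -, hθ⟩ := Finset.exists_ne_zero_of_sum_ne_zero (hμ.2 ▸ one_ne_zero)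
      exact ⟨θ, by simpa [S] using hθ⟩
    have hpos : 0 < maxMargin u a S :=
      ((mem_BRf_iff_margin_nonneg.1 ha).trans (margin_le_maxMargin u a hμS)).lt_of_ne
        (hu a S hS).symm
    obtain ⟨μ', hμ'S, hμ'⟩ := exists_margin_eq_maxMargin u a hS
    refine ⟨μ', hμ'S.1, fun θ hθ => ?_, BRf_eq_singleton_iff_margin_pos.2 (hμ' ▸ hpos)⟩
    simpa [S] using not_imp_comm.1 (hμ'S.2 θ) hθ

theorem URset_eq_iInter :
    URset A Θ = ⋂ a, ⋂ S : Finset Θ, ⋂ (_ : S.Nonempty), {u | maxMargin u a S ≠ 0} := by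
  ext u
  simp [mem_URset_iff]

theorem volume_setOf_maxMargin_eq_zero (a : A) {S : Finset Θ} (hS : S.Nonempty) :
    volume {u : A × Θ → ℝ | maxMargin u a S = 0} = 0 :=
  Measure.addHaar_preimage_singleton_eq_zero_of_map_add_smul volume
    (continuous_maxMargin a S).measurable (fun u t => maxMargin_add_smul u a hS t) 0

end Nontrivial

theorem URset_isOpen_dense_ae_general
    (A Θ : Type) [Fintype A] [Fintype Θ] :
    IsOpen (URset A Θ) ∧ Dense (URset A Θ) ∧ volume (URset A Θ)ᶜ = 0 := by
  classical
  rcases subsingleton_or_nontrivial A with hA | hA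
  · simp [URset_eq_univ_of_subsingleton]
  have hopen : IsOpen (URset A Θ) := by
    rw [URset_eq_iInter]
    exact isOpen_iInter_of_finite fun a => isOpen_iInter_of_finite fun S =>
      isOpen_iInter_of_finite fun _ => isOpen_ne_fun (continuous_maxMargin a S) continuous_const
  have hnull : volume (URset A Θ)ᶜ = 0 := by
    rw [URset_eq_iInter]
    simp only [Set.compl_iInter, Set.compl_ofPred, not_not, measure_iUnion_null_iff]
    exact fun a S hS => volume_setOf_maxMargin_eq_zero a hS
  exact ⟨hopen, Measure.dense_of_ae (mem_ae_iff.2 hnull), hnull⟩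

/-- **Genericity of the unique-best-response property.** The set `𝒰_R` is open and dense
in `ℝ^{A×Θ}` and its complement is Lebesgue-null. -/
theorem URset_isOpen_dense_ae
    (A Θ : Type) [Fintype A] [Fintype Θ] [Nonempty A] [Nonempty Θ] :
    IsOpen (URset A Θ) ∧ Dense (URset A Θ) ∧ volume (URset A Θ)ᶜ = 0 :=
  URset_isOpen_dense_ae_general A Θ
end

section
/- If the environment is ordered, then every μ ∈ ΔΘ admits some a ∈ { min A*_R(μ), max A*_R(μ) } such that ∫ u_S(a,θ) dμ(θ) = v(μ); that is, the sender's highest payoff among receiver best responses to μ is attained at the smallest or the largest element of A*_R(μ). -/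
open MeasureTheory


/-- **Extreme best responses in ordered environments.** If the environment is ordered
(`A, Θ ⊆ ℝ`, `u_R` has strictly increasing differences, and at each belief the
receiver's expected payoff is strictly quasiconcave in the action or the sender's
expected payoff is weakly quasiconvex in the action), then at every belief `μ` the
sender's best payoff among receiver best responses is attained at the smallest or the
largest element of `A*_R(μ)`. -/
theorem ordered_env_extreme_best_response
    (A Θ : Set ℝ) [Nonempty ↥A] [Nonempty ↥Θ] [CompactSpace ↥A] [CompactSpace ↥Θ]
    (uS uR : ↥A → ↥Θ → ℝ)
    (hS : Continuous fun p : ↥A × ↥Θ => uS p.1 p.2)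
    (hR : Continuous fun p : ↥A × ↥Θ => uR p.1 p.2)
    (hsid : ∀ a a' : ↥A, (a : ℝ) < (a' : ℝ) → ∀ θ θ' : ↥Θ, (θ : ℝ) < (θ' : ℝ) →
      uR a' θ - uR a θ < uR a' θ' - uR a θ')
    (hquasi : ∀ μ : ProbabilityMeasure ↥Θ,
      (∀ aL aM aH : ↥A, (aL : ℝ) < (aM : ℝ) → (aM : ℝ) < (aH : ℝ) →
        min (∫ θ, uR aL θ ∂(μ : Measure ↥Θ)) (∫ θ, uR aH θ ∂(μ : Measure ↥Θ)) <
          ∫ θ, uR aM θ ∂(μ : Measure ↥Θ)) ∨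
      (∀ aL aM aH : ↥A, (aL : ℝ) ≤ (aM : ℝ) → (aM : ℝ) ≤ (aH : ℝ) →
        senderEU uS μ aM ≤ max (senderEU uS μ aL) (senderEU uS μ aH))) :
    ∀ μ : ProbabilityMeasure ↥Θ, ∃ a ∈ bestResponses uR μ,
      senderEU uS μ a = vFun uS uR μ ∧
      ((a : ℝ) = sInf ((fun b : ↥A => (b : ℝ)) '' bestResponses uR μ) ∨
        (a : ℝ) = sSup ((fun b : ↥A => (b : ℝ)) '' bestResponses uR μ)) := by
  intro μ
  classical
  -- continuity of expected utilities in the action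
  have hconint : ∀ (u : ↥A → ↥Θ → ℝ), Continuous (fun p : ↥A × ↥Θ => u p.1 p.2) →
      Continuous (fun a => ∫ θ, u a θ ∂(μ : Measure ↥Θ)) := by
    intro u hu
    obtain ⟨C, hC⟩ : ∃ C, ∀ p : ↥A × ↥Θ, ‖u p.1 p.2‖ ≤ C := by
      obtain ⟨p0, -, hp0⟩ := isCompact_univ.exists_isMaxOn
        (Set.univ_nonempty (α := ↥A × ↥Θ)) hu.norm.continuousOn
      exact ⟨‖u p0.1 p0.2‖, fun p => hp0 (Set.mem_univ p)⟩
    apply MeasureTheory.continuous_of_dominated (bound := fun _ => C)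
    · intro a
      exact ((hu.comp (Continuous.prodMk_right a)).aestronglyMeasurable)
    · intro a
      exact Filter.Eventually.of_forall fun θ => hC (a, θ)
    · exact MeasureTheory.integrable_const C
    · exact Filter.Eventually.of_forall fun θ =>
        hu.comp (Continuous.prodMk_left θ)
  set f : ↥A → ℝ := fun a => ∫ θ, uR a θ ∂(μ : Measure ↥Θ) with hfdef
  have hfc : Continuous f := hconint uR hR
  have hgc : Continuous (senderEU uS μ) := hconint uS hS
  have hBRdef : bestResponses uR μ = {a | ∀ a' : ↥A, f a' ≤ f a} := rfl
  -- best responses nonempty, closed, compact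
  have hBRne : (bestResponses uR μ).Nonempty := by
    obtain ⟨a0, -, ha0⟩ := isCompact_univ.exists_isMaxOn
      (Set.univ_nonempty (α := ↥A)) hfc.continuousOn
    exact ⟨a0, fun a' => ha0 (Set.mem_univ a')⟩
  have hBRclosed : IsClosed (bestResponses uR μ) := by
    have : bestResponses uR μ = ⋂ a' : ↥A, {a | f a' ≤ f a} := by
      ext a; simp [hBRdef, Set.mem_iInter]
    rw [this]
    exact isClosed_iInter fun a' => isClosed_le continuous_const hfc
  have hBRc : IsCompact (bestResponses uR μ) := hBRclosed.isCompact
  -- extremes of the best response set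
  set S : Set ℝ := (fun b : ↥A => (b : ℝ)) '' bestResponses uR μ with hSdef
  have hSc : IsCompact S := hBRc.image continuous_subtype_val
  have hSne : S.Nonempty := hBRne.image _
  obtain ⟨amin, haminBR, hamin⟩ : ∃ a ∈ bestResponses uR μ, (a : ℝ) = sInf S := by
    obtain ⟨a, ha, h⟩ := hSc.sInf_mem hSne
    exact ⟨a, ha, h⟩
  obtain ⟨amax, hamaxBR, hamax⟩ : ∃ a ∈ bestResponses uR μ, (a : ℝ) = sSup S := by
    obtain ⟨a, ha, h⟩ := hSc.sSup_mem hSne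
    exact ⟨a, ha, h⟩
  have hbdA : BddAbove S := hSc.bddAbove
  have hbdB : BddBelow S := hSc.bddBelow
  have hmemS : ∀ a ∈ bestResponses uR μ, (a : ℝ) ∈ S := fun a ha => ⟨a, ha, rfl⟩
  -- the value is attained at some maximizer over best responses
  obtain ⟨astar, hastarBR, hastar⟩ := hBRc.exists_isMaxOn hBRne hgc.continuousOn
  have hval : ∀ a ∈ bestResponses uR μ,
      (∀ b ∈ bestResponses uR μ, senderEU uS μ b ≤ senderEU uS μ a) →
      senderEU uS μ a = vFun uS uR μ := by
    intro a ha hub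
    have hg : IsGreatest (senderEU uS μ '' bestResponses uR μ) (senderEU uS μ a) := by
      refine ⟨⟨a, ha, rfl⟩, ?_⟩
      rintro x ⟨b, hb, rfl⟩
      exact hub b hb
    exact hg.csSup_eq.symm
  rcases hquasi μ with hqc | hqv
  · -- strict quasiconcavity: every best response is extreme
    refine ⟨astar, hastarBR, hval astar hastarBR (fun b hb => hastar hb), ?_⟩
    by_contra hcon
    push_neg at hcon
    obtain ⟨h1, h2⟩ := hcon
    have hlt1 : (amin : ℝ) < (astar : ℝ) :=
      lt_of_le_of_ne (hamin ▸ csInf_le hbdB (hmemS astar hastarBR))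
        (by rw [hamin]; exact fun h => h1 h.symm)
    have hlt2 : (astar : ℝ) < (amax : ℝ) :=
      lt_of_le_of_ne (hamax ▸ le_csSup hbdA (hmemS astar hastarBR)) (hamax ▸ h2)
    have h := hqc amin astar amax hlt1 hlt2
    have e1 : f amin = f astar := le_antisymm (hastarBR amin) (haminBR astar)
    have e2 : f amax = f astar := le_antisymm (hastarBR amax) (hamaxBR astar)
    rw [show (∫ θ, uR amin θ ∂(μ : Measure ↥Θ)) = f amin from rfl,
      show (∫ θ, uR amax θ ∂(μ : Measure ↥Θ)) = f amax from rfl,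
      show (∫ θ, uR astar θ ∂(μ : Measure ↥Θ)) = f astar from rfl, e1, e2,
      min_self] at h
    exact lt_irrefl _ h
  · -- weak quasiconvexity of sender EU: max over BR attained at an extreme
    have hub : ∀ b ∈ bestResponses uR μ,
        senderEU uS μ b ≤ max (senderEU uS μ amin) (senderEU uS μ amax) := by
      intro b hb
      refine hqv amin b amax ?_ ?_
      · rw [hamin]; exact csInf_le hbdB (hmemS b hb)
      · rw [hamax]; exact le_csSup hbdA (hmemS b hb)
    by_cases hcase : senderEU uS μ amin ≤ senderEU uS μ amax
    · refine ⟨amax, hamaxBR, hval amax hamaxBR (fun b hb => ?_), Or.inr hamax⟩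
      simpa [max_eq_right hcase] using hub b hb
    · refine ⟨amin, haminBR, hval amin haminBR (fun b hb => ?_), Or.inl hamin⟩
      have := hub b hb
      rw [max_eq_left (le_of_not_ge hcase)] at this
      exact this
end
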